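/- arXiv:2405.12909 — 4 statements merged into one kernel-verified Lean document; each statement's English description precedes it below -/
import Mathlib

section
/- For a finite connected graph X, the edge Jacobian ℤE⁺/(H₁(X,ℤ) + S(X,ℤ)) is isomorphic to the vertex Jacobian Div⁰(X)/Pr(X), with the isomorphism induced by the boundary map d. -/
noncomputable def degMap (V : Type) [Fintype V] : (V → ℤ) →ₗ[ℤ] ℤ where
  toFun f := ∑ v, f v
  map_add' f g := by simp [Finset.sum_add_distrib]
  map_smul' c f := by simp [Finset.mul_sum]

noncomputable def bd {E V : Type} [Fintype E] [DecidableEq V]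
    (o t : E → V) : (E → ℤ) →ₗ[ℤ] (V → ℤ) where
  toFun f v := ∑ e, f e * ((if t e = v then 1 else 0) - (if o e = v then 1 else 0))
  map_add' f g := by
    funext v; simp [add_mul, Finset.sum_add_distrib]
  map_smul' c f := by
    funext v; simp [Finset.mul_sum, mul_assoc]

noncomputable def starMap {E V : Type} (o t : E → V) : (V → ℤ) →ₗ[ℤ] (E → ℤ) where
  toFun f e := f (t e) - f (o e)
  map_add' f g := by funext e; simp; ring
  map_smul' c f := by funext e; simp; ring

def GConnected {E V : Type} (o t : E → V) : Prop :=
  ∀ v w : V, Relation.EqvGen (fun a b => ∃ e, o e = a ∧ t e = b) v w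

lemma deg_bd {E V : Type} [Fintype E] [Fintype V] [DecidableEq V]
    (o t : E → V) (x : E → ℤ) : bd o t x ∈ LinearMap.ker (degMap V) := by
  simp only [LinearMap.mem_ker, degMap, bd, LinearMap.coe_mk, AddHom.coe_mk]
  rw [Finset.sum_comm]
  apply Finset.sum_eq_zero
  intro e _
  rw [← Finset.mul_sum]
  simp [Finset.sum_sub_distrib]

/-- indicator difference divisor -/
def Dd {V : Type} [DecidableEq V] (a b : V) : V → ℤ :=
  fun v => (if b = v then 1 else 0) - (if a = v then 1 else 0)

lemma Dd_mem_range {E V : Type} [Fintype E] [Fintype V] [DecidableEq V]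
    (o t : E → V) (hconn : GConnected o t) (a b : V) :
    Dd a b ∈ LinearMap.range (bd o t) := by
  have h := hconn a b
  induction h with
  | rel x y hxy =>
    obtain ⟨e, he1, he2⟩ := hxy
    classical
    refine ⟨Pi.single e 1, ?_⟩
    funext v
    simp only [bd, LinearMap.coe_mk, AddHom.coe_mk, Dd]
    rw [Finset.sum_eq_single e]
    · simp [he1, he2, eq_comm]
    · intro e' _ hne; simp [Pi.single_eq_of_ne hne]
    · simp
  | refl x =>
    have : Dd x x = 0 := by funext v; simp [Dd]
    rw [this]; exact Submodule.zero_mem _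
  | symm x y _ ih =>
    have : Dd y x = -Dd x y := by funext v; dsimp [Dd]; ring
    rw [this]; exact Submodule.neg_mem _ ih
  | trans x y z _ _ ih1 ih2 =>
    have : Dd x z = Dd x y + Dd y z := by funext v; dsimp [Dd]; ring
    rw [this]; exact Submodule.add_mem _ ih1 ih2

lemma bd_surj_onto_ker {E V : Type} [Fintype E] [Fintype V] [DecidableEq V]
    (o t : E → V) (hconn : GConnected o t) (d : V → ℤ)
    (hd : d ∈ LinearMap.ker (degMap V)) : d ∈ LinearMap.range (bd o t) := by
  simp only [LinearMap.mem_ker, degMap, LinearMap.coe_mk, AddHom.coe_mk] at hd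
  by_cases hV : Nonempty V
  · obtain ⟨v₀⟩ := hV
    have hrep : d = ∑ w, d w • Dd v₀ w := by
      funext v
      simp only [Finset.sum_apply, Pi.smul_apply, Dd, smul_eq_mul, mul_sub,
        Finset.sum_sub_distrib]
      have h1 : (∑ x, d x * if x = v then 1 else 0) = d v := by simp [mul_ite]
      have h2 : (∑ x, d x * if v₀ = v then 1 else 0) = 0 := by
        rw [← Finset.sum_mul, hd, zero_mul]
      rw [h1, h2, sub_zero]
    rw [hrep]
    exact Submodule.sum_mem _ fun w _ =>
      Submodule.smul_mem _ _ (Dd_mem_range o t hconn v₀ w)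
  · have : d = bd o t 0 := by
      funext v; exact absurd ⟨v⟩ hV
    rw [this]; exact ⟨0, rfl⟩

/-- For a finite connected graph the edge Jacobian `ℤE⁺/(H₁(X,ℤ) + S(X,ℤ))` is isomorphic
to the vertex Jacobian `Div⁰(X)/Pr(X)`, via the map induced by the boundary map `d`. -/
theorem edge_jacobian_iso_vertex_jacobian
    {E V : Type} [Fintype E] [Fintype V] [DecidableEq V]
    (o t : E → V) (hconn : GConnected o t) :
    ∃ φ : ((E → ℤ) ⧸ (LinearMap.ker (bd o t) ⊔ LinearMap.range (starMap o t))) ≃ₗ[ℤ]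
        (↥(LinearMap.ker (degMap V)) ⧸
          Submodule.comap (LinearMap.ker (degMap V)).subtype
            (LinearMap.range (bd o t ∘ₗ starMap o t))),
      ∀ (x : E → ℤ) (h : bd o t x ∈ LinearMap.ker (degMap V)),
        φ (Submodule.Quotient.mk x) = Submodule.Quotient.mk ⟨bd o t x, h⟩ := by
  set N := Submodule.comap (LinearMap.ker (degMap V)).subtype
      (LinearMap.range (bd o t ∘ₗ starMap o t)) with hN
  -- the map (E → ℤ) →ₗ ker(degMap)
  set g : (E → ℤ) →ₗ[ℤ] ↥(LinearMap.ker (degMap V)) :=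
    (bd o t).codRestrict (LinearMap.ker (degMap V)) (deg_bd o t) with hg
  set f : (E → ℤ) →ₗ[ℤ] (↥(LinearMap.ker (degMap V)) ⧸ N) := N.mkQ ∘ₗ g with hf
  have hker : LinearMap.ker (bd o t) ⊔ LinearMap.range (starMap o t) ≤ LinearMap.ker f := by
    apply sup_le
    · intro x hx
      simp only [LinearMap.mem_ker] at hx ⊢
      simp only [hf, LinearMap.comp_apply, Submodule.mkQ_apply]
      have : g x = 0 := by
        apply Subtype.ext
        simpa [hg, LinearMap.codRestrict_apply] using hx
      rw [this]; simp
    · rintro _ ⟨y, rfl⟩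
      simp only [LinearMap.mem_ker, hf, LinearMap.comp_apply, Submodule.mkQ_apply,
        Submodule.Quotient.mk_eq_zero]
      exact ⟨y, rfl⟩
  set φ₀ := (LinearMap.ker (bd o t) ⊔ LinearMap.range (starMap o t)).liftQ f hker with hφ₀
  have hsurj : Function.Surjective φ₀ := by
    intro q
    obtain ⟨⟨d, hd⟩, rfl⟩ := Submodule.mkQ_surjective N q
    obtain ⟨x, hx⟩ := bd_surj_onto_ker o t hconn d hd
    refine ⟨Submodule.Quotient.mk x, ?_⟩
    rw [hφ₀, Submodule.liftQ_apply]
    simp only [hf, LinearMap.comp_apply, Submodule.mkQ_apply]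
    congr 1
    exact Subtype.ext hx
  have hinj : Function.Injective φ₀ := by
    rw [← LinearMap.ker_eq_bot]
    rw [Submodule.ker_liftQ_eq_bot' _ _ ?_]
    apply le_antisymm hker
    intro x hx
    simp only [LinearMap.mem_ker, hf, LinearMap.comp_apply, Submodule.mkQ_apply,
      Submodule.Quotient.mk_eq_zero, hN, Submodule.mem_comap] at hx
    obtain ⟨y, hy⟩ := hx
    have hy' : bd o t (starMap o t y) = bd o t x := by
      simpa [hg, LinearMap.codRestrict_apply] using hy
    have : x - starMap o t y ∈ LinearMap.ker (bd o t) := by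
      simp [LinearMap.mem_ker, map_sub, hy']
    have hx2 : x = (x - starMap o t y) + starMap o t y := by ring
    rw [hx2]
    exact Submodule.add_mem _ (Submodule.mem_sup_left this)
      (Submodule.mem_sup_right ⟨y, rfl⟩)
  refine ⟨LinearEquiv.ofBijective φ₀ ⟨hinj, hsurj⟩, ?_⟩
  intro x h
  show φ₀ (Submodule.Quotient.mk x) = _
  rw [hφ₀, Submodule.liftQ_apply]
  simp only [hf, LinearMap.comp_apply, Submodule.mkQ_apply]
  rfl
end

section
/- Let p be prime, u ≥ 0, and Γ_n cyclic of order pⁿ with generator γ. The map f = (f₁,f₂): ℤ_p[Γ_n] → ℤ_p × (ℤ/p^uℤ)[Γ_n], sending Σ aᵢγⁱ to (Σ aᵢ, Σ [aᵢ]γⁱ), is a ring homomorphism whose kernel is the ideal generated by p^u(γ − 1). -/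
noncomputable abbrev padicGroupRing (p n : ℕ) [Fact p.Prime] : Type :=
  MonoidAlgebra ℤ_[p] (Multiplicative (ZMod (p ^ n)))

noncomputable def γgen (p n : ℕ) [Fact p.Prime] : padicGroupRing p n :=
  MonoidAlgebra.of ℤ_[p] (Multiplicative (ZMod (p ^ n))) (Multiplicative.ofAdd 1)

/-!
The kernel is `(γ - 1) ∩ (p^u)`. An element `p^u y` of `(p^u)` has augmentation `p^u ε(y)`,
which vanishes only when `ε(y) = 0` because `ℤ_p` is a domain, i.e. when `y ∈ (γ - 1)`.
-/

open MonoidAlgebra Bialgebra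

section Augmentation

variable {R M : Type*} [CommRing R] [CommMonoid M]

lemma MonoidAlgebra.of_sub_one_mem_span_of_sub_one {g m : M} (hm : m ∈ Submonoid.powers g) :
    of R M m - 1 ∈ Ideal.span {of R M g - 1} := by
  obtain ⟨k, rfl⟩ := hm
  rw [map_pow, Ideal.mem_span_singleton]
  simpa using sub_dvd_pow_sub_pow (of R M g) 1 k

lemma MonoidAlgebra.sub_algebraMap_counitAlgHom_mem_span {g : M}
    (hg : ∀ m, m ∈ Submonoid.powers g) (x : MonoidAlgebra R M) :
    x - algebraMap R _ (counitAlgHom R _ x) ∈ Ideal.span {of R M g - 1} := by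
  induction x using MonoidAlgebra.induction_linear with
  | zero => simp
  | add x y hx hy =>
    convert Ideal.add_mem _ hx hy using 1
    rw [map_add, map_add]
    abel
  | single m r =>
    have h : single m r - algebraMap R _ (counitAlgHom R _ (single m r)) =
        algebraMap R _ r * (of R M m - 1) := by
      simp [mul_sub, single_mul_single]
    rw [h]
    exact Ideal.mul_mem_left _ _ (of_sub_one_mem_span_of_sub_one (hg m))

lemma MonoidAlgebra.ker_counitAlgHom_eq_span {g : M} (hg : ∀ m, m ∈ Submonoid.powers g) :
    RingHom.ker (counitAlgHom R (MonoidAlgebra R M)) = Ideal.span {of R M g - 1} := by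
  refine le_antisymm (fun x hx => ?_) ?_
  · simpa [RingHom.mem_ker.mp hx] using sub_algebraMap_counitAlgHom_mem_span hg x
  · rw [Ideal.span_le, Set.singleton_subset_iff]
    simp

end Augmentation

lemma MonoidAlgebra.ker_mapRingHom_eq_span {R S M : Type*} [CommRing R] [Ring S] [CommMonoid M]
    {φ : R →+* S} {r : R} (hφ : RingHom.ker φ = Ideal.span {r}) :
    RingHom.ker (mapRingHom M φ) = Ideal.span {algebraMap R (MonoidAlgebra R M) r} := by
  refine le_antisymm (fun x hx => ?_) ?_
  · rw [← sum_coeff_single x]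
    refine Ideal.sum_mem _ fun m _ => ?_
    have hm : x.coeff m ∈ RingHom.ker φ := by
      rw [RingHom.mem_ker, ← coeff_mapRingHom, RingHom.mem_ker.mp hx, coeff_zero]
      rfl
    obtain ⟨c, hc⟩ := Ideal.mem_span_singleton.mp (hφ ▸ hm)
    rw [hc, ← smul_eq_mul, ← smul_single, Algebra.smul_def]
    exact Ideal.mul_mem_right _ _ (Ideal.mem_span_singleton_self _)
  · have hr : φ r = 0 := by
      rw [← RingHom.mem_ker, hφ]
      exact Ideal.mem_span_singleton_self r
    rw [Ideal.span_le, Set.singleton_subset_iff, SetLike.mem_coe, RingHom.mem_ker]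
    ext m
    simp [hr]

lemma RingHom.ker_prod_eq_span_mul {A B C : Type*} [CommRing A] [Semiring B] [Semiring C]
    (f : A →+* B) (g : A →+* C) {a b : A} (hf : RingHom.ker f = Ideal.span {b})
    (hg : RingHom.ker g = Ideal.span {a}) (ha : f a ∈ nonZeroDivisorsLeft B) :
    RingHom.ker (f.prod g) = Ideal.span {a * b} := by
  ext x
  rw [RingHom.mem_ker, prod_apply, Prod.mk_eq_zero, ← RingHom.mem_ker, ← RingHom.mem_ker, hg,
    Ideal.mem_span_singleton, Ideal.mem_span_singleton]
  constructor
  · rintro ⟨hx, y, rfl⟩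
    have hy : y ∈ RingHom.ker f := ha _ (by rwa [RingHom.mem_ker, map_mul] at hx)
    obtain ⟨z, rfl⟩ := Ideal.mem_span_singleton.mp (hf ▸ hy)
    exact ⟨z, by ring⟩
  · rintro ⟨z, rfl⟩
    refine ⟨?_, b * z, by ring⟩
    rw [hf]
    exact Ideal.mul_mem_right _ _ (Ideal.mul_mem_left _ _ (Ideal.mem_span_singleton_self b))

lemma Multiplicative.mem_powers_ofAdd_one {N : ℕ} [NeZero N] (m : Multiplicative (ZMod N)) :
    m ∈ Submonoid.powers (ofAdd 1) :=
  ⟨m.toAdd.val, by beta_reduce; rw [← ofAdd_nsmul, nsmul_one, ZMod.natCast_zmod_val, ofAdd_toAdd]⟩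

/-- The map `f = (f₁, f₂) : ℤ_p[Γ_n] → ℤ_p × (ℤ/p^uℤ)[Γ_n]`, `Σ aᵢγⁱ ↦ (Σ aᵢ, Σ [aᵢ]γⁱ)`
(augmentation in the first coordinate, coefficientwise reduction mod `p^u` in the second),
is a ring homomorphism with kernel the ideal generated by `p^u(γ − 1)`. -/
theorem ker_augmentation_times_reduction (p u n : ℕ) [Fact p.Prime] :
    ∃ f : padicGroupRing p n →+*
        ℤ_[p] × MonoidAlgebra (ZMod (p ^ u)) (Multiplicative (ZMod (p ^ n))),
      (∀ (a : ℤ_[p]) (g : Multiplicative (ZMod (p ^ n))),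
        f (MonoidAlgebra.single g a) =
          (a, MonoidAlgebra.single g (PadicInt.toZModPow u a))) ∧
      RingHom.ker f = Ideal.span {(p : padicGroupRing p n) ^ u * (γgen p n - 1)} := by
  refine ⟨(counitAlgHom ℤ_[p] (padicGroupRing p n)).toRingHom.prod
    (mapRingHom _ (PadicInt.toZModPow u)), fun a g => by simp, ?_⟩
  refine RingHom.ker_prod_eq_span_mul _ _
    (ker_counitAlgHom_eq_span Multiplicative.mem_powers_ofAdd_one) ?_ ?_
  · rw [ker_mapRingHom_eq_span (PadicInt.ker_toZModPow u), map_pow, map_natCast]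
  · simp [(Fact.out : p.Prime).ne_zero]
end

section
/- Let p be prime, u ≥ 0, n ≥ u, and Γ_n cyclic of order pⁿ with generator γ. The quotient ℤ_p[Γ_n]/(p^u(1−γ), N_n(γ)) (where N_n(γ) = 1 + γ + ⋯ + γ^{pⁿ−1}) has cardinality p^{n−u} · (p^u)^{pⁿ} = pⁿ · (p^u)^{pⁿ−1}. -/
open scoped Pointwise

theorem AddSubgroup.index_eq_relIndex_mul_index_sup {G : Type*} [AddCommGroup G]
    (H K : AddSubgroup G) : H.index = H.relIndex K * (H ⊔ K).index := by
  rw [← relIndex_sup_left, ← relIndex_mul_index le_sup_left]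

theorem PadicInt.index_span_p_pow (p : ℕ) [Fact p.Prime] (k : ℕ) :
    (Ideal.span {(p : ℤ_[p]) ^ k}).toAddSubgroup.index = p ^ k := by
  rw [← PadicInt.ker_toZModPow]
  exact (Nat.card_congr (RingHom.quotientKerEquivOfSurjective
    (ZMod.ringHom_surjective (PadicInt.toZModPow k))).toEquiv).trans (Nat.card_zmod _)

theorem Submodule.index_smul_top {A M : Type*} [CommRing A] [Nontrivial A] [AddCommGroup M]
    [Module A M] [Module.Free A M] [Module.Finite A M] (c : A) :
    (c • (⊤ : Submodule A M)).toAddSubgroup.index =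
      (Ideal.span {c}).toAddSubgroup.index ^ Module.finrank A M := by
  let e := (Module.finBasis A M).equivFun
  have h : (c • (⊤ : Submodule A M)).toAddSubgroup =
      (AddSubgroup.pi Set.univ fun _ => (Ideal.span {c}).toAddSubgroup).comap
        e.toLinearMap.toAddMonoidHom := by
    ext x
    simp only [Submodule.mem_toAddSubgroup, Submodule.mem_smul_pointwise_iff_exists,
      Submodule.mem_top, true_and, AddSubgroup.mem_comap, AddSubgroup.mem_pi, Set.mem_univ,
      forall_const, Ideal.mem_span_singleton]
    constructor
    · rintro ⟨y, rfl⟩ i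
      simp
    · intro hx
      choose d hd using hx
      refine ⟨e.symm d, e.injective ?_⟩
      ext i
      simpa using (hd i).symm
  rw [h, AddSubgroup.index_comap_of_surjective _ e.surjective, AddSubgroup.index_pi,
    Finset.prod_const, Finset.card_univ, Fintype.card_fin]

open MonoidAlgebra Finset

namespace CyclicGroupRing

variable (A : Type*) [CommRing A] (m : ℕ)

noncomputable abbrev gen : MonoidAlgebra A (Multiplicative (ZMod m)) :=
  of A _ (Multiplicative.ofAdd 1)

noncomputable abbrev norm : MonoidAlgebra A (Multiplicative (ZMod m)) :=
  ∑ i ∈ range m, gen A m ^ i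

noncomputable abbrev augmentation : MonoidAlgebra A (Multiplicative (ZMod m)) →ₐ[A] A :=
  lift A A _ 1

variable {A m}

theorem of_eq_gen_pow [NeZero m] (g : Multiplicative (ZMod m)) :
    of A _ g = gen A m ^ (g.toAdd.val) := by
  rw [gen, ← map_pow, ← ofAdd_nsmul, nsmul_one, ZMod.natCast_zmod_val]
  rfl

theorem gen_pow_card : gen A m ^ m = 1 := by
  rw [gen, ← map_pow, ← ofAdd_nsmul, nsmul_one, ZMod.natCast_self, ofAdd_zero, map_one]

theorem one_sub_gen_mul_norm : (1 - gen A m) * norm A m = 0 := by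
  rw [norm, mul_comm, ← neg_sub, mul_neg, geom_sum_mul, gen_pow_card, sub_self, neg_zero]

theorem augmentation_gen : augmentation A m (gen A m) = 1 := by
  simp [augmentation, gen]

theorem augmentation_norm : augmentation A m (norm A m) = m := by
  simp [norm]

theorem augmentation_surjective : Function.Surjective (augmentation A m) :=
  fun a => ⟨algebraMap A _ a, AlgHom.commutes _ a⟩

theorem sub_augmentation_mem_span [NeZero m] (x : MonoidAlgebra A (Multiplicative (ZMod m))) :
    x - algebraMap A _ (augmentation A m x) ∈ Ideal.span {1 - gen A m} := by
  induction x using MonoidAlgebra.induction_on with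
  | of g =>
    have hg : augmentation A m (of A _ g) = 1 := by simp
    have h := sub_dvd_pow_sub_pow 1 (gen A m) g.toAdd.val
    rw [one_pow] at h
    rw [hg, map_one, Ideal.mem_span_singleton, of_eq_gen_pow]
    exact dvd_sub_comm.1 h
  | add x y hx hy => simpa [add_sub_add_comm] using add_mem hx hy
  | smul a x hx => simpa [smul_sub, ← Algebra.smul_def] using Submodule.smul_of_tower_mem _ a hx

theorem ker_augmentation [NeZero m] :
    RingHom.ker (augmentation A m) = Ideal.span {1 - gen A m} := by
  refine le_antisymm (fun x hx => ?_) ?_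
  · simpa [(RingHom.mem_ker).1 hx] using sub_augmentation_mem_span x
  · rw [Ideal.span_le, Set.singleton_subset_iff, SetLike.mem_coe, RingHom.mem_ker]
    simp

theorem map_augmentation_span (c : A) :
    Ideal.map (augmentation A m) (Ideal.span {algebraMap A _ c * (1 - gen A m), norm A m}) =
      Ideal.span {(m : A)} := by
  rw [Ideal.map_span, Set.image_pair, map_mul, map_sub, map_one, augmentation_gen, sub_self,
    mul_zero, augmentation_norm, Ideal.span_insert_zero]

theorem span_inf_ker_augmentation [NeZero m] [IsDomain A] [CharZero A] (c : A) :
    Ideal.span {algebraMap A _ c * (1 - gen A m), norm A m} ⊓ RingHom.ker (augmentation A m) =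
      Ideal.span {algebraMap A _ c} * RingHom.ker (augmentation A m) := by
  refine le_antisymm ?_ (le_inf ?_ Ideal.mul_le_right)
  · rintro x ⟨hxI, hxJ⟩
    obtain ⟨a, b, rfl⟩ := Ideal.mem_span_pair.1 hxI
    have hb : augmentation A m b = 0 := by
      simpa [augmentation_gen, augmentation_norm, NeZero.ne m] using hxJ
    have hb' : b ∈ Ideal.span {1 - gen A m} :=
      ker_augmentation (A := A) (m := m) ▸ RingHom.mem_ker.2 hb
    obtain ⟨d, rfl⟩ := Ideal.mem_span_singleton'.1 hb'
    rw [mul_assoc, one_sub_gen_mul_norm, mul_zero, add_zero]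
    refine Ideal.mem_span_singleton_mul.2 ⟨a * (1 - gen A m), ?_, by ring⟩
    rw [ker_augmentation]
    exact Ideal.mul_mem_left _ _ (Ideal.subset_span rfl)
  · rw [ker_augmentation, Ideal.span_singleton_mul_span_singleton]
    exact Ideal.span_mono (by simp)

theorem finrank_ker_augmentation [NeZero m] [IsDomain A] :
    Module.finrank A (RingHom.ker (augmentation A m)) = m - 1 := by
  have hR : Module.finrank A (MonoidAlgebra A (Multiplicative (ZMod m))) = m := by
    rw [Module.finrank_eq_card_basis (MonoidAlgebra.basis _ A), Fintype.card_multiplicative,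
      ZMod.card]
  have hquot :=
    Submodule.finrank_quotient_add_finrank (LinearMap.ker (augmentation A m).toLinearMap)
  rw [(LinearMap.quotKerEquivOfSurjective _ augmentation_surjective).finrank_eq,
    Module.finrank_self, hR] at hquot
  change Module.finrank A (LinearMap.ker (augmentation A m).toLinearMap) = m - 1
  omega

theorem relIndex_span_mul_ker_augmentation [NeZero m] [IsDomain A] [IsPrincipalIdealRing A]
    (c : A) :
    (Ideal.span {algebraMap A _ c} * RingHom.ker (augmentation A m)).toAddSubgroup.relIndex
        (RingHom.ker (augmentation A m)).toAddSubgroup =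
      (Ideal.span {c}).toAddSubgroup.index ^ (m - 1) := by
  rw [← finrank_ker_augmentation (A := A), ← Submodule.index_smul_top, AddSubgroup.relIndex]
  congr 1
  ext ⟨x, hx⟩
  change x ∈ Ideal.span {algebraMap A _ c} * RingHom.ker (augmentation A m) ↔
    (⟨x, hx⟩ : RingHom.ker (augmentation A m)) ∈ c • (⊤ : Submodule A _)
  rw [Ideal.mem_span_singleton_mul, Submodule.mem_smul_pointwise_iff_exists]
  constructor
  · rintro ⟨z, hz, hzx⟩
    exact ⟨⟨z, hz⟩, Submodule.mem_top, Subtype.ext (by simpa [Algebra.smul_def] using hzx)⟩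
  · rintro ⟨y, -, hy⟩
    exact ⟨y, y.2, by simpa [Algebra.smul_def] using congrArg Subtype.val hy⟩

theorem index_span_sup_ker_augmentation [NeZero m] (c : A) :
    (Ideal.span {algebraMap A _ c * (1 - gen A m), norm A m} ⊔
        RingHom.ker (augmentation A m)).toAddSubgroup.index =
      (Ideal.span {(m : A)}).toAddSubgroup.index := by
  rw [RingHom.ker_eq_comap_bot,
    ← Ideal.comap_map_of_surjective (augmentation A m) augmentation_surjective,
    map_augmentation_span]
  exact AddSubgroup.index_comap_of_surjective (Ideal.span {(m : A)}).toAddSubgroup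
    (f := (augmentation A m).toRingHom.toAddMonoidHom) augmentation_surjective

theorem index_span_one_sub_gen_norm [NeZero m] [IsDomain A] [IsPrincipalIdealRing A] [CharZero A]
    (c : A) :
    (Ideal.span {algebraMap A _ c * (1 - gen A m), norm A m}).toAddSubgroup.index =
      (Ideal.span {c}).toAddSubgroup.index ^ (m - 1) *
        (Ideal.span {(m : A)}).toAddSubgroup.index := by
  rw [AddSubgroup.index_eq_relIndex_mul_index_sup _ (RingHom.ker (augmentation A m)).toAddSubgroup,
    ← AddSubgroup.inf_relIndex_right, ← Submodule.sup_toAddSubgroup,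
    index_span_sup_ker_augmentation, ← relIndex_span_mul_ker_augmentation,
    ← span_inf_ker_augmentation]
  rfl

end CyclicGroupRing

/-- For `n ≥ u`, the quotient `ℤ_p[Γ_n]/(p^u(1−γ), N_n(γ))`, where
`N_n(γ) = 1 + γ + ⋯ + γ^{pⁿ−1}`, has cardinality
`p^{n−u}·(p^u)^{pⁿ} = pⁿ·(p^u)^{pⁿ−1}`. -/
theorem quotient_card_general_case (p u n : ℕ) [Fact p.Prime] (hun : u ≤ n) :
    Nat.card (padicGroupRing p n ⧸ Ideal.span
        {(p : padicGroupRing p n) ^ u * (1 - γgen p n),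
         ∑ i ∈ Finset.range (p ^ n), γgen p n ^ i}) =
      p ^ (n - u) * (p ^ u) ^ (p ^ n) ∧
    p ^ (n - u) * (p ^ u) ^ (p ^ n) = p ^ n * (p ^ u) ^ (p ^ n - 1) := by
  have hexp : p ^ (n - u) * (p ^ u) ^ (p ^ n) = p ^ n * (p ^ u) ^ (p ^ n - 1) := by
    calc p ^ (n - u) * (p ^ u) ^ (p ^ n) = p ^ (n - u) * (p ^ u * (p ^ u) ^ (p ^ n - 1)) := by
          rw [← pow_succ', Nat.sub_add_cancel (Nat.one_le_pow _ _ (Fact.out : p.Prime).pos)]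
      _ = p ^ n * (p ^ u) ^ (p ^ n - 1) := by
          rw [← mul_assoc, ← pow_add, Nat.sub_add_cancel hun]
  refine ⟨?_, hexp⟩
  rw [hexp, ← map_natCast (algebraMap ℤ_[p] _), ← map_pow]
  refine (CyclicGroupRing.index_span_one_sub_gen_norm _).trans ?_
  rw [Nat.cast_pow, PadicInt.index_span_p_pow, PadicInt.index_span_p_pow, mul_comm]
end

section
/- For the ℤ_p-tower over the bouquet B_k with all voltages equal to the topological generator γ, and u = v_p(k), for all n ≥ u the p-part of the Jacobian satisfies #𝒥(X_n)[p^∞] = p^{u·pⁿ + n − u}; in particular the size has the Iwasawa-type form p^{λpⁿ + μn + ν} with λ = u, μ = 1, ν = −u. -/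
/-- The Jacobian of a graph: degree-zero divisors modulo principal divisors. -/
noncomputable abbrev Jacobian {E V : Type} [Fintype E] [Fintype V] [DecidableEq V]
    (o t : E → V) :=
  ↥(LinearMap.ker (degMap V)) ⧸
    Submodule.comap (LinearMap.ker (degMap V)).subtype
      (LinearMap.range (bd o t ∘ₗ starMap o t))

/-!
The Laplacian of `X_n` is `k` times the Laplacian of the `m`-cycle, `m = pⁿ`, and the latter is a
second forward difference `Δ ∘ Δ` up to a shift. On `ℤ^{ℤ/m}`, `Δ` maps onto `Div⁰` with kernel
the constants, so `Δ(Div⁰)` has index `[ℤ^{ℤ/m} : Div⁰ + constants] = m` in `Div⁰`, while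
multiplication by `k` has index `k^{m-1}` on `Div⁰ ≅ ℤ^{m-1}`. Hence `#𝒥(X_n) = m·k^{m-1}`.
The `p`-primary part of a finite abelian group is its Sylow `p`-subgroup, of order
`p^{v_p(m·k^{m-1})} = p^{n + u(pⁿ-1)}`.
-/

open fwdDiff

theorem CommGroup.card_primaryComponent {G : Type*} [CommGroup G] [Finite G] (p : ℕ)
    [Fact p.Prime] : Nat.card (primaryComponent G p) = p ^ (Nat.card G).factorization p := by
  obtain ⟨Q, hQ⟩ := (primaryComponent.isPGroup (G := G) (p := p)).exists_le_sylow
  have hle : (Q : Subgroup G) ≤ primaryComponent G p := fun g hg => by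
    obtain ⟨j, hj⟩ := Q.isPGroup' ⟨g, hg⟩
    exact ⟨j, by simpa using congrArg Subtype.val hj⟩
  rw [le_antisymm hQ hle, Q.card_eq_multiplicity]

namespace AddCommGroup

variable {A : Type*} [AddCommGroup A] (p : ℕ)

theorem card_primaryComponent [Finite A] [Fact p.Prime] :
    Nat.card (primaryComponent A p) = p ^ padicValNat p (Nat.card A) := by
  rw [← Nat.factorization_def _ Fact.out]
  exact CommGroup.card_primaryComponent (G := Multiplicative A) p

theorem mem_primaryComponent_iff_zsmul {x : A} :
    x ∈ primaryComponent A p ↔ ∃ j : ℕ, (p : ℤ) ^ j • x = 0 := by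
  simp [← natCast_zsmul]

end AddCommGroup

theorem fwdDiff_single {M G : Type*} [AddCommGroup M] [DecidableEq M] [AddCommGroup G]
    (h u : M) (a : G) :
    Δ_[h] (Pi.single u a : M → G) = Pi.single (u - h) a - Pi.single u a := by
  ext v
  simp [fwdDiff, Pi.single_apply, ← eq_sub_iff_add_eq]

theorem ZMod.apply_eq_apply_zero_of_fwdDiff_eq_zero {m : ℕ} [NeZero m] {G : Type*}
    [AddCommGroup G] {f : ZMod m → G} (hf : Δ_[1] f = 0) (v : ZMod m) : f v = f 0 := by
  have hnat : ∀ n : ℕ, f n = f 0 := by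
    intro n
    induction n with
    | zero => simp
    | succ n ih => rw [← ih, Nat.cast_succ, ← sub_eq_zero]; exact congrFun hf n
  simpa using hnat v.val

section Divisors

variable (V : Type) [Fintype V]

theorem degMap_apply (f : V → ℤ) : degMap V f = ∑ v, f v := rfl

noncomputable abbrev degZeroDivisors : AddSubgroup (V → ℤ) :=
  (LinearMap.ker (degMap V)).toAddSubgroup

variable {V} in
theorem mem_degZeroDivisors {f : V → ℤ} : f ∈ degZeroDivisors V ↔ ∑ v, f v = 0 := Iff.rfl

theorem finrank_degZeroDivisors [Nonempty V] :
    Module.finrank ℤ (degZeroDivisors V) = Fintype.card V - 1 := by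
  have hsurj : Function.Surjective (degMap V) := fun a => by
    classical exact ⟨Pi.single (Classical.arbitrary V) a, by simp [degMap_apply]⟩
  have hsum := (LinearMap.ker (degMap V)).finrank_quotient_add_finrank
  rw [((degMap V).quotKerEquivOfSurjective hsurj).finrank_eq, Module.finrank_self,
    Module.finrank_fintype_fun_eq_card] at hsum
  change Module.finrank ℤ (LinearMap.ker (degMap V)) = _
  omega

end Divisors

section Cycle

variable {m : ℕ}

noncomputable def cycleDiff (m : ℕ) : (ZMod m → ℤ) →+ (ZMod m → ℤ) :=
  AddMonoidHom.mk' (fwdDiff 1) (fwdDiff_add 1)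

theorem cycleDiff_apply (f : ZMod m → ℤ) : cycleDiff m f = Δ_[1] f := rfl

variable [NeZero m]

theorem single_sub_single_zero_mem_range_cycleDiff (v : ZMod m) :
    Pi.single v 1 - Pi.single 0 1 ∈ (cycleDiff m).range := by
  have hnat : ∀ n : ℕ, Pi.single (n : ZMod m) 1 - Pi.single 0 1 ∈ (cycleDiff m).range := by
    intro n
    induction n with
    | zero => simp
    | succ n ih =>
      have hstep : Pi.single ((n + 1 : ℕ) : ZMod m) (1 : ℤ) - Pi.single (n : ZMod m) 1 =
          cycleDiff m (-Pi.single ((n + 1 : ℕ) : ZMod m) 1) := by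
        rw [map_neg, cycleDiff_apply, fwdDiff_single, Nat.cast_succ, add_sub_cancel_right,
          neg_sub]
      rw [← sub_add_sub_cancel _ (Pi.single (n : ZMod m) 1), hstep]
      exact add_mem ⟨_, rfl⟩ ih
  simpa using hnat v.val

theorem range_cycleDiff : (cycleDiff m).range = degZeroDivisors (ZMod m) := by
  apply le_antisymm
  · rintro _ ⟨f, rfl⟩
    rw [mem_degZeroDivisors, cycleDiff_apply]
    simp only [fwdDiff, Finset.sum_sub_distrib]
    rw [sub_eq_zero]
    exact Fintype.sum_equiv (Equiv.addRight 1) _ _ fun _ => rfl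
  · intro D hD
    have hD' : D = ∑ v, D v • (Pi.single v 1 - Pi.single 0 1) := by
      ext w
      simp [Finset.sum_apply, Pi.single_apply, mul_sub, Finset.sum_sub_distrib,
        mem_degZeroDivisors.1 hD]
    rw [hD']
    exact sum_mem fun v _ => zsmul_mem (single_sub_single_zero_mem_range_cycleDiff v) _

noncomputable def degreeMod (m : ℕ) [NeZero m] : (ZMod m → ℤ) →+ ZMod m :=
  (Int.castAddHom (ZMod m)).comp (degMap (ZMod m)).toAddMonoidHom

theorem degZeroDivisors_sup_ker_cycleDiff :
    degZeroDivisors (ZMod m) ⊔ (cycleDiff m).ker = (degreeMod m).ker := by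
  apply le_antisymm
  · refine sup_le (fun f hf => ?_) (fun f hf => ?_)
    · simp [degreeMod, degMap_apply, mem_degZeroDivisors.1 hf]
    · have hconst := ZMod.apply_eq_apply_zero_of_fwdDiff_eq_zero (f := f) hf
      simp [degreeMod, degMap_apply, Fintype.sum_congr _ _ hconst]
  · intro f hf
    obtain ⟨c, hc⟩ := (ZMod.intCast_zmod_eq_zero_iff_dvd _ m).1 hf
    have hconst : (fun _ => c : ZMod m → ℤ) ∈ (cycleDiff m).ker := fwdDiff_const 1 c
    rw [← sub_add_cancel f (fun _ => c)]
    refine AddSubgroup.add_mem_sup (mem_degZeroDivisors.2 ?_) hconst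
    simp only [Pi.sub_apply, Finset.sum_sub_distrib, ← degMap_apply, ZMod.card,
      Finset.sum_const, Finset.card_univ, nsmul_eq_mul]
    exact sub_eq_zero.2 hc

theorem index_ker_degreeMod : (degreeMod m).ker.index = m := by
  have hsurj : Function.Surjective (degreeMod m) := fun z =>
    ⟨Pi.single 0 z.cast, by simp [degreeMod, degMap_apply]⟩
  rw [AddSubgroup.index_ker, AddMonoidHom.range_eq_top.2 hsurj, AddSubgroup.card_top,
    Nat.card_zmod]

theorem relIndex_map_cycleDiff :
    ((degZeroDivisors (ZMod m)).map (cycleDiff m)).relIndex (degZeroDivisors (ZMod m)) = m := by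
  calc ((degZeroDivisors (ZMod m)).map (cycleDiff m)).relIndex (degZeroDivisors (ZMod m))
      = ((degZeroDivisors (ZMod m)).map (cycleDiff m)).relIndex
          ((⊤ : AddSubgroup _).map (cycleDiff m)) := by
        rw [← AddMonoidHom.range_eq_map, range_cycleDiff]
    _ = (degreeMod m).ker.index := by
        rw [AddSubgroup.relIndex_map_map, top_sup_eq, AddSubgroup.relIndex_top_right,
          degZeroDivisors_sup_ker_cycleDiff]
    _ = m := index_ker_degreeMod

end Cycle

section ThickenedCycle

variable {m : ℕ} [NeZero m] (k : ℕ)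

noncomputable abbrev thickenedCycleLaplacian : (ZMod m → ℤ) →ₗ[ℤ] (ZMod m → ℤ) :=
  bd (fun e : ZMod m × Fin k => e.1) (fun e => e.1 + 1) ∘ₗ
    starMap (fun e : ZMod m × Fin k => e.1) (fun e => e.1 + 1)

theorem thickenedCycleLaplacian_apply (f : ZMod m → ℤ) (v : ZMod m) :
    thickenedCycleLaplacian k f v = k * (2 * f v - f (v - 1) - f (v + 1)) := by
  simp [bd, starMap, Fintype.sum_prod_type, mul_sub, Finset.sum_sub_distrib,
    ← eq_sub_iff_add_eq]
  ring

theorem thickenedCycleLaplacian_eq_nsmul_fwdDiff_fwdDiff (f : ZMod m → ℤ) :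
    thickenedCycleLaplacian k f = k • Δ_[1] (Δ_[1] fun v => -f (v - 1)) := by
  ext v
  rw [thickenedCycleLaplacian_apply]
  simp only [fwdDiff, Pi.smul_apply, nsmul_eq_mul, add_sub_cancel_right, add_assoc,
    one_add_one_eq_two]
  rw [show v + 2 - 1 = v + 1 by ring]
  ring

theorem range_thickenedCycleLaplacian :
    (LinearMap.range (thickenedCycleLaplacian (m := m) k)).toAddSubgroup =
      ((degZeroDivisors (ZMod m)).map (cycleDiff m)).map (nsmulAddMonoidHom k) := by
  rw [← range_cycleDiff, ← AddMonoidHom.range_comp, ← AddMonoidHom.range_comp]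
  ext D
  constructor
  · rintro ⟨f, rfl⟩
    exact ⟨fun v => -f (v - 1), (thickenedCycleLaplacian_eq_nsmul_fwdDiff_fwdDiff k f).symm⟩
  · rintro ⟨g, rfl⟩
    refine ⟨fun v => -g (v + 1), ?_⟩
    simp [thickenedCycleLaplacian_eq_nsmul_fwdDiff_fwdDiff, cycleDiff_apply]

variable {k}

theorem card_jacobian_thickenedCycle (hk : k ≠ 0) :
    Nat.card (Jacobian (fun e : ZMod m × Fin k => e.1) (fun e => e.1 + 1)) = m * k ^ (m - 1) := by
  set D := degZeroDivisors (ZMod m)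
  set R := D.map (cycleDiff m)
  have hRD : R ≤ D := (AddSubgroup.map_le_range _ _).trans_eq range_cycleDiff
  have hkD : D.map (nsmulAddMonoidHom k) ≤ D := by
    rintro _ ⟨x, hx, rfl⟩
    exact nsmul_mem hx k
  have hinj : Function.Injective (nsmulAddMonoidHom (α := ZMod m → ℤ) k) :=
    AddSubgroup.nsmulAddMonoidHom_injective_of_isTorsionFree hk
  calc Nat.card (Jacobian (fun e : ZMod m × Fin k => e.1) (fun e => e.1 + 1))
      = (R.map (nsmulAddMonoidHom k)).relIndex D := by
        rw [AddSubgroup.relIndex, ← range_thickenedCycleLaplacian]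
        rfl
    _ = (R.map (nsmulAddMonoidHom k)).relIndex (D.map (nsmulAddMonoidHom k)) *
          (D.map (nsmulAddMonoidHom k)).relIndex D :=
        (AddSubgroup.relIndex_mul_relIndex _ _ _ (AddSubgroup.map_mono hRD) hkD).symm
    _ = m * k ^ (m - 1) := by
        rw [AddSubgroup.relIndex_map_map_of_injective _ _ hinj, relIndex_map_cycleDiff,
          AddSubgroup.relIndex_map_nsmul, finrank_degZeroDivisors, ZMod.card]

end ThickenedCycle

theorem jacobian_p_part_asymptotics_general (p n k : ℕ) (hp : p.Prime) (hk : 1 ≤ k) :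
    haveI : NeZero (p ^ n) := ⟨pow_ne_zero n hp.ne_zero⟩
    Nat.card {x : Jacobian (fun e : ZMod (p ^ n) × Fin k => e.1) (fun e => e.1 + 1) //
        ∃ m : ℕ, (p : ℤ) ^ m • x = 0} =
      p ^ (padicValNat p k * p ^ n + n - padicValNat p k) := by
  have : Fact p.Prime := ⟨hp⟩
  have hk0 : k ≠ 0 := by omega
  have hcard := card_jacobian_thickenedCycle (m := p ^ n) hk0
  have : Finite (Jacobian (fun e : ZMod (p ^ n) × Fin k => e.1) (fun e => e.1 + 1)) :=
    Nat.finite_of_card_ne_zero (by rw [hcard]; exact mul_ne_zero (NeZero.ne _) (pow_ne_zero _ hk0))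
  rw [← Nat.card_congr (Equiv.subtypeEquivRight
      fun _ => AddCommGroup.mem_primaryComponent_iff_zsmul p),
    AddCommGroup.card_primaryComponent, hcard, padicValNat.mul (NeZero.ne _) (pow_ne_zero _ hk0),
    padicValNat.prime_pow, padicValNat.pow]
  have hle : padicValNat p k ≤ p ^ n * padicValNat p k :=
    Nat.le_mul_of_pos_left _ (pow_pos hp.pos n)
  rw [Nat.sub_one_mul, mul_comm (padicValNat p k)]
  congr 1
  omega

/-- For the `ℤ_p`-tower over the bouquet `B_k` (all voltages `γ`), whose layer `X_n` is the
thickened `pⁿ`-cycle with `k` parallel edges between consecutive vertices, and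
`u = v_p(k)`: for all `n ≥ u`, the `p`-primary part of the Jacobian of `X_n` has size
`p^{u·pⁿ + n − u}`; in particular it has the Iwasawa-type form `p^{λpⁿ + μn + ν}` with
`λ = u`, `μ = 1`, `ν = −u`. -/
theorem jacobian_p_part_asymptotics (p n k : ℕ) (hp : p.Prime) (hk : 1 ≤ k)
    (hn : padicValNat p k ≤ n) :
    haveI : NeZero (p ^ n) := ⟨pow_ne_zero n hp.ne_zero⟩
    Nat.card {x : Jacobian (fun e : ZMod (p ^ n) × Fin k => e.1) (fun e => e.1 + 1) //
        ∃ m : ℕ, (p : ℤ) ^ m • x = 0} =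
      p ^ (padicValNat p k * p ^ n + n - padicValNat p k) :=
  jacobian_p_part_asymptotics_general p n k hp hk
end
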